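/- arXiv:1608.02600 — 7 statements merged into one kernel-verified Lean document; each statement's English description precedes it below -/
import Mathlib

section
/- Let $u$ and $v$ be unitary operators on a finite-dimensional Hilbert space and let $\alpha = p/q$ with $p, q$ coprime positive integers. If $uv = e^{2\pi i \alpha} vu$, then the dimension of the Hilbert space is a multiple of $q$. -/
open scoped Matrix

/-!
Taking determinants of `u v = ω v u` gives `det u det v = ω ^ n det v det u`, and the
determinants of unitaries are units, so `ω ^ n = 1`. Since `ω = e^{2πi p/q}` is a primitive
`q`-th root of unity, `q ∣ n`.
-/

namespace Matrix

variable {ι R : Type*} [Fintype ι] [DecidableEq ι] [CommRing R]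

theorem pow_card_eq_one_of_mul_eq_smul_mul {A B : Matrix ι ι R} {c : R}
    (h : A * B = c • (B * A)) (hAB : IsUnit (A * B).det) : c ^ Fintype.card ι = 1 := by
  have hdet : (A * B).det * c ^ Fintype.card ι = (A * B).det * 1 := by
    rw [mul_one]
    conv_rhs => rw [h, det_smul, det_mul]
    rw [det_mul]
    ring
  exact hAB.mul_left_cancel hdet

theorem isUnit_det_of_mem_unitary [StarRing R] {A : Matrix ι ι R}
    (hA : A ∈ unitary (Matrix ι ι R)) : IsUnit A.det :=
  Unitary.isUnit_coe (U := ⟨A.det, det_of_mem_unitary hA⟩)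

end Matrix

theorem stmt_0_general (n p q : ℕ) (hq : 0 < q) (hpq : Nat.Coprime p q)
    (u v : Matrix.unitaryGroup (Fin n) ℂ)
    (h : (u : Matrix (Fin n) (Fin n) ℂ) * v =
      Complex.exp (2 * Real.pi * Complex.I * (p / q)) •
        ((v : Matrix (Fin n) (Fin n) ℂ) * u)) :
    q ∣ n := by
  have hω := Complex.isPrimitiveRoot_exp_of_coprime p q hq.ne' hpq
  have hωn := Matrix.pow_card_eq_one_of_mul_eq_smul_mul h
    (Matrix.isUnit_det_of_mem_unitary (u * v).2)
  rw [Fintype.card_fin] at hωn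
  exact hω.dvd_of_pow_eq_one n hωn

/-- **Finite-dimensional Stone–von Neumann theorem.**
If unitaries `u, v` on an `n`-dimensional Hilbert space exactly twisted
commute, `u * v = e^{2πi p/q} • (v * u)` with `p, q` coprime, then `q ∣ n`. -/
theorem stmt_0 (n p q : ℕ) (hp : 0 < p) (hq : 0 < q) (hpq : Nat.Coprime p q)
    (u v : Matrix.unitaryGroup (Fin n) ℂ)
    (h : (u : Matrix (Fin n) (Fin n) ℂ) * v =
      Complex.exp (2 * Real.pi * Complex.I * (p / q)) •
        ((v : Matrix (Fin n) (Fin n) ℂ) * u)) :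
    q ∣ n :=
  stmt_0_general n p q hq hpq u v h
end

section
/- Let $H$ be a self-adjoint operator with $H\Pi = 0$ and $H^2 \geq \Delta^2 \bar\Pi$, where $\Pi$ is the orthogonal projector onto the (finite-dimensional) ground space, $\bar\Pi = I - \Pi$, and $\Delta > 0$. If $U$ is a unitary with $\|[H,U]\| \leq \epsilon$ (operator norm), then $\|\bar\Pi U \Pi + \Pi U \bar\Pi\| \leq \epsilon/\Delta$. -/
open scoped Matrix Matrix.Norms.L2Operator ComplexOrder MatrixOrder

/-! The argument works in any C⋆-algebra. Conjugating the gap inequality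
`Δ² (1 - p) ≤ h²` by `v p` and using `h p = 0` gives
`Δ² ‖(1 - p) v p‖² ≤ ‖h v p‖² = ‖[h, v] p‖²`. Applied to `u` and to `u⋆` (whose commutator
with `h` has the same norm), this bounds both off-diagonal blocks of `u` by `‖[h, u]‖ / Δ`.
The two blocks have orthogonal ranges and supports, so for their sum `X` and any common
bound `r` of their norms, `X⋆ X ≤ r² p + r² (1 - p) = r²`. -/

theorem norm_commutator_star_unitary {E : Type*} [NormedRing E] [StarRing E] [CStarRing E]
    (h : E) {u : E} (hu : u ∈ unitary E) :
    ‖h * star u - star u * h‖ = ‖h * u - u * h‖ := by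
  have : h * star u - star u * h = star u * (u * h - h * u) * star u := by
    rw [mul_sub, sub_mul, ← mul_assoc, ← mul_assoc, Unitary.star_mul_self_of_mem hu, one_mul,
      mul_assoc, mul_assoc, Unitary.mul_star_self_of_mem hu, mul_one]
  rw [this, CStarRing.norm_mul_mem_unitary _ (Unitary.star_mem hu),
    CStarRing.norm_mem_unitary_mul _ (Unitary.star_mem hu), norm_sub_rev]

section CStarAlgebra

variable {A : Type*} [CStarAlgebra A] [PartialOrder A] [StarOrderedRing A]

theorem norm_mul_le_norm_mul_of_star_mul_self_le {a b : A} (hab : star a * a ≤ star b * b)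
    (x : A) : ‖a * x‖ ≤ ‖b * x‖ := by
  have key : star (a * x) * (a * x) ≤ star (b * x) * (b * x) := by
    simpa only [star_mul, mul_assoc] using star_left_conjugate_le_conjugate hab x
  have := CStarAlgebra.norm_le_norm_of_nonneg_of_le (star_mul_self_nonneg _) key
  rw [CStarRing.norm_star_mul_self, CStarRing.norm_star_mul_self] at this
  exact (mul_self_le_mul_self_iff (norm_nonneg _) (norm_nonneg _)).2 this

theorem mul_norm_mul_le_of_sq_smul_le {q h : A} (hq : IsStarProjection q) (hh : IsSelfAdjoint h)
    {Δ : ℝ} (hΔ : 0 ≤ Δ) (hgap : Δ ^ 2 • q ≤ h * h) (x : A) :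
    Δ * ‖q * x‖ ≤ ‖h * x‖ := by
  have hsq : star (Δ • q) * (Δ • q) = Δ ^ 2 • q := by
    rw [star_smul, hq.isSelfAdjoint.star_eq, smul_mul_smul, hq.isIdempotentElem.eq, sq,
      star_trivial]
  have := norm_mul_le_norm_mul_of_star_mul_self_le (a := Δ • q) (b := h)
    (by rwa [hsq, hh.star_eq]) x
  rwa [smul_mul_assoc, norm_smul, Real.norm_of_nonneg hΔ] at this

theorem mul_norm_one_sub_mul_mul_le_norm_commutator {p h : A} (hp : IsStarProjection p)
    (hh : IsSelfAdjoint h) (hker : h * p = 0) {Δ : ℝ} (hΔ : 0 ≤ Δ)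
    (hgap : Δ ^ 2 • (1 - p) ≤ h * h) (v : A) :
    Δ * ‖(1 - p) * v * p‖ ≤ ‖h * v - v * h‖ :=
  calc Δ * ‖(1 - p) * v * p‖ ≤ ‖h * (v * p)‖ := by
        simpa only [mul_assoc] using mul_norm_mul_le_of_sq_smul_le hp.one_sub hh hΔ hgap (v * p)
    _ = ‖(h * v - v * h) * p‖ := by
        rw [sub_mul, mul_assoc v, hker, mul_zero, sub_zero, mul_assoc]
    _ ≤ ‖h * v - v * h‖ * ‖p‖ := norm_mul_le _ _
    _ ≤ ‖h * v - v * h‖ := mul_le_of_le_one_right (norm_nonneg _) (hp.norm_le p)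

theorem star_mul_self_le_algebraMap_mul_of_mul_eq {a p : A} (hp : IsStarProjection p)
    (hap : a * p = a) {r : ℝ} (hr : ‖a‖ ≤ r) :
    star a * a ≤ algebraMap ℝ A (r ^ 2) * p := by
  have hle : star a * a ≤ algebraMap ℝ A (r ^ 2) := by
    rw [← CStarAlgebra.norm_le_iff_le_algebraMap _ (sq_nonneg r) (star_mul_self_nonneg a),
      CStarRing.norm_star_mul_self, ← sq]
    exact pow_le_pow_left₀ (norm_nonneg a) hr 2
  calc star a * a = star (a * p) * (a * p) := by rw [hap]
    _ = star p * (star a * a) * p := by simp only [star_mul, mul_assoc]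
    _ ≤ star p * algebraMap ℝ A (r ^ 2) * p := star_left_conjugate_le_conjugate hle p
    _ = algebraMap ℝ A (r ^ 2) * p := by
        rw [hp.isSelfAdjoint.star_eq, ← Algebra.commutes, mul_assoc, hp.isIdempotentElem.eq]

theorem IsStarProjection.norm_offDiag_le {p : A} (hp : IsStarProjection p) (x y : A) {r : ℝ}
    (hx : ‖(1 - p) * x * p‖ ≤ r) (hy : ‖p * y * (1 - p)‖ ≤ r) :
    ‖(1 - p) * x * p + p * y * (1 - p)‖ ≤ r := by
  set a := (1 - p) * x * p
  set b := p * y * (1 - p)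
  have hr : 0 ≤ r := (norm_nonneg _).trans hx
  have hqp (z : A) : (1 - p) * (p * z) = 0 := by rw [← mul_assoc, hp.one_sub_mul_self, zero_mul]
  have hpq (z : A) : p * ((1 - p) * z) = 0 := by rw [← mul_assoc, hp.mul_one_sub_self, zero_mul]
  have hab : star a * b = 0 := by
    simp only [a, b, star_mul, hp.isSelfAdjoint.star_eq, hp.one_sub.isSelfAdjoint.star_eq,
      mul_assoc, hqp, mul_zero]
  have hba : star b * a = 0 := by
    simp only [a, b, star_mul, hp.isSelfAdjoint.star_eq, hp.one_sub.isSelfAdjoint.star_eq,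
      mul_assoc, hpq, mul_zero]
  have hap : a * p = a := by simp only [a, mul_assoc, hp.isIdempotentElem.eq]
  have hbq : b * (1 - p) = b := by simp only [b, mul_assoc, hp.one_sub.isIdempotentElem.eq]
  have hsum : star (a + b) * (a + b) ≤ algebraMap ℝ A (r ^ 2) :=
    calc star (a + b) * (a + b) = star a * a + star b * b := by
          rw [star_add, add_mul, mul_add, mul_add, hab, hba, add_zero, zero_add]
      _ ≤ algebraMap ℝ A (r ^ 2) * p + algebraMap ℝ A (r ^ 2) * (1 - p) :=
          add_le_add (star_mul_self_le_algebraMap_mul_of_mul_eq hp hap hx)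
            (star_mul_self_le_algebraMap_mul_of_mul_eq hp.one_sub hbq hy)
      _ = algebraMap ℝ A (r ^ 2) := by rw [← mul_add, add_sub_cancel, mul_one]
  rw [← CStarAlgebra.norm_le_iff_le_algebraMap _ (sq_nonneg r) (star_mul_self_nonneg _),
    CStarRing.norm_star_mul_self, ← sq] at hsum
  exact (pow_le_pow_iff_left₀ (norm_nonneg _) hr two_ne_zero).1 hsum

theorem norm_offDiag_le_norm_commutator_div {p h : A} (hp : IsStarProjection p)
    (hh : IsSelfAdjoint h) (hker : h * p = 0) {Δ : ℝ} (hΔ : 0 < Δ)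
    (hgap : Δ ^ 2 • (1 - p) ≤ h * h) (u : unitary A) :
    ‖(1 - p) * u * p + p * u * (1 - p)‖ ≤ ‖h * u - u * h‖ / Δ := by
  refine hp.norm_offDiag_le _ _ ?_ ?_ <;> rw [le_div_iff₀ hΔ, mul_comm]
  · exact mul_norm_one_sub_mul_mul_le_norm_commutator hp hh hker hΔ.le hgap u
  · have hstar : star ((1 - p) * star (u : A) * p) = p * u * (1 - p) := by
      rw [star_mul, star_mul, star_star, hp.isSelfAdjoint.star_eq,
        hp.one_sub.isSelfAdjoint.star_eq, mul_assoc]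
    rw [← hstar, norm_star, ← norm_commutator_star_unitary h u.prop]
    exact mul_norm_one_sub_mul_mul_le_norm_commutator hp hh hker hΔ.le hgap _

end CStarAlgebra

/-- Small off-diagonal blocks: if `H P = 0`, `H² ≥ Δ² (1 - P)` for the orthogonal ground
space projector `P`, and `‖[H,U]‖ ≤ ε` for a unitary `U`, then
`‖(1-P) U P + P U (1-P)‖ ≤ ε / Δ` in the operator norm. -/
theorem stmt_2 (n : ℕ) (H P : Matrix (Fin n) (Fin n) ℂ) (Δ ε : ℝ) (hΔ : 0 < Δ)
    (hH : H.IsHermitian) (hPherm : P.IsHermitian) (hPproj : P * P = P)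
    (hker : H * P = 0)
    (hgap : (H * H - (Δ ^ 2 : ℝ) • (1 - P)).PosSemidef)
    (U : Matrix.unitaryGroup (Fin n) ℂ)
    (hcomm : ‖H * (U : Matrix (Fin n) (Fin n) ℂ) - (U : Matrix (Fin n) (Fin n) ℂ) * H‖ ≤ ε) :
    ‖(1 - P) * (U : Matrix (Fin n) (Fin n) ℂ) * P +
        P * (U : Matrix (Fin n) (Fin n) ℂ) * (1 - P)‖ ≤ ε / Δ :=
  (norm_offDiag_le_norm_commutator_div ⟨hPproj, hPherm⟩ hH hker hΔ (Matrix.le_iff.2 hgap)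
    U).trans (div_le_div_of_nonneg_right hcomm hΔ.le)
end

section
/- Let $H$ be self-adjoint with $H\Pi = 0$ and $H^2 \geq \Delta^2(I-\Pi)$ for an orthogonal projection $\Pi$ and $\Delta > 0$. Let $U$ be a unitary with $\|[U,H]\| \leq \epsilon$ and set $\xi = \epsilon/\Delta \leq 1$. Then $\|\Pi - |\Pi U \Pi|\| \leq 1 - \sqrt{1-\xi^2}$, i.e. the restriction of $U$ to the ground space is approximately unitary. -/
open scoped Matrix Matrix.Norms.L2Operator ComplexOrder

/-- The positive semidefinite square root (removed from Mathlib; restored with its old definition). -/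
noncomputable def Matrix.PosSemidef.sqrt {n 𝕜 : Type*} [Fintype n] [DecidableEq n] [RCLike 𝕜]
    {A : Matrix n n 𝕜} (hA : A.PosSemidef) : Matrix n n 𝕜 :=
  hA.1.eigenvectorUnitary.1 * Matrix.diagonal ((↑) ∘ (√·) ∘ hA.1.eigenvalues) *
    (star hA.1.eigenvectorUnitary : Matrix n n 𝕜)

/-!
The argument works in any unital C⋆-algebra. Put `a = |PUP|² = P U* P U P` and `B = (1 - P) U P`,
so that `P - a = B* B`. Since `HP = 0`, `H U P = -[U, H] P`, and the gap inequality conjugated by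
`U P` gives `Δ² B* B ≤ (HUP)* (HUP) ≤ ε² P`. Hence `(1 - ξ²) P ≤ a ≤ P`. Adding the complementary
projection, `(1 - ξ²) ≤ a + (1 - P) ≤ 1`, and `√(a + (1 - P)) = √a + (1 - P)` because
`a = P a P`. Operator monotonicity of the square root then places `√a + (1 - P)`
between `√(1 - ξ²)` and `1`, and `P - √a = 1 - (√a + (1 - P))`.
-/

open scoped MatrixOrder

lemma CFC.sqrt_algebraMap_real {A : Type*} [CStarAlgebra A] [PartialOrder A] [StarOrderedRing A]
    {c : ℝ} (hc : 0 ≤ c) : CFC.sqrt (algebraMap ℝ A c) = algebraMap ℝ A √c :=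
  CFC.sqrt_unique (by rw [← map_mul, Real.mul_self_sqrt hc])
    (algebraMap_nonneg A (Real.sqrt_nonneg c))

theorem Matrix.PosSemidef.sqrt_eq_cfcSqrt {n 𝕜 : Type*} [Fintype n] [DecidableEq n] [RCLike 𝕜]
    {A : Matrix n n 𝕜} (hA : A.PosSemidef) : hA.sqrt = CFC.sqrt A := by
  rw [CFC.sqrt_eq_real_sqrt A hA.nonneg, cfcₙ_eq_cfc, hA.1.cfc_eq, Matrix.IsHermitian.cfc,
    Unitary.conjStarAlgAut_apply, Matrix.PosSemidef.sqrt]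

namespace IsStarProjection

lemma sub_star_mul_self_compress {R : Type*} [Ring R] [StarRing R] {p u : R}
    (hp : IsStarProjection p) (hu : u ∈ unitary R) :
    p - star (p * u * p) * (p * u * p) = star ((1 - p) * u * p) * ((1 - p) * u * p) := by
  have hpp : ∀ x, p * (p * x) = p * x := fun x => by rw [← mul_assoc, hp.isIdempotentElem.eq]
  have huu : ∀ x, star u * (u * x) = x := fun x => by
    rw [← mul_assoc, Unitary.star_mul_self_of_mem hu, one_mul]
  simp only [star_mul, star_sub, hp.isSelfAdjoint.star_eq, mul_assoc, sub_mul, mul_sub,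
    one_mul, hpp, huu, hp.isIdempotentElem.eq, sub_self, sub_zero]

variable {A : Type*} [CStarAlgebra A] [PartialOrder A] [StarOrderedRing A] {p : A}

theorem sq_smul_sub_compress_le (hp : IsStarProjection p) {h u : A} (hh : IsSelfAdjoint h)
    (hhp : h * p = 0) {Δ : ℝ} (hgap : Δ ^ 2 • (1 - p) ≤ h * h) (hu : u ∈ unitary A) :
    Δ ^ 2 • (p - star (p * u * p) * (p * u * p)) ≤ ‖u * h - h * u‖ ^ 2 • p := by
  set k := u * h - h * u
  have hkp : k * p = -(h * (u * p)) := by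
    simp only [k, sub_mul, mul_assoc, hhp, mul_zero, zero_sub]
  have hq := hp.one_sub
  calc Δ ^ 2 • (p - star (p * u * p) * (p * u * p))
      = star (u * p) * (Δ ^ 2 • (1 - p)) * (u * p) := by
        rw [hp.sub_star_mul_self_compress hu, mul_smul_comm, smul_mul_assoc]
        simp only [star_mul, hq.isSelfAdjoint.star_eq, mul_assoc, ← mul_assoc (1 - p) (1 - p),
          hq.isIdempotentElem.eq]
    _ ≤ star (u * p) * (h * h) * (u * p) := star_left_conjugate_le_conjugate hgap _
    _ = star p * (star k * k) * p := by
        rw [show star p * (star k * k) * p = star (k * p) * (k * p) by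
            simp only [star_mul, mul_assoc],
          hkp, star_neg, neg_mul_neg, star_mul h, hh.star_eq]
        simp only [mul_assoc]
    _ ≤ star p * algebraMap ℝ A (‖k‖ ^ 2) * p :=
        star_left_conjugate_le_conjugate CStarAlgebra.star_mul_le_algebraMap_norm_sq p
    _ = ‖k‖ ^ 2 • p := by
        rw [Algebra.algebraMap_eq_smul_one, mul_smul_comm, mul_one, smul_mul_assoc,
          hp.isSelfAdjoint.star_eq, hp.isIdempotentElem.eq]

theorem sqrt_add_one_sub (hp : IsStarProjection p) {a : A} (ha : 0 ≤ a) (hap : a * p = a) :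
    CFC.sqrt (a + (1 - p)) = CFC.sqrt a + (1 - p) := by
  have hq : IsStarProjection (1 - p) := hp.one_sub
  have hs : star (CFC.sqrt a) = CFC.sqrt a := (CFC.sqrt_nonneg a).isSelfAdjoint.star_eq
  have hsq : CFC.sqrt a * (1 - p) = 0 := by
    rw [← CStarRing.star_mul_self_eq_zero_iff, star_mul, hs, hq.isSelfAdjoint.star_eq, mul_assoc,
      ← mul_assoc (CFC.sqrt a), CFC.sqrt_mul_sqrt_self a ha, mul_sub, mul_one, hap, sub_self,
      mul_zero]
  have hqs : (1 - p) * CFC.sqrt a = 0 := by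
    simpa only [star_mul, hs, hq.isSelfAdjoint.star_eq, star_zero] using congrArg star hsq
  refine CFC.sqrt_unique ?_ (add_nonneg (CFC.sqrt_nonneg a) hq.nonneg)
  rw [add_mul, mul_add, mul_add, hsq, hqs, hq.isIdempotentElem.eq, CFC.sqrt_mul_sqrt_self a ha,
    add_zero, zero_add]

theorem norm_sub_sqrt_le (hp : IsStarProjection p) {a : A} (hap : a * p = a) {c : ℝ}
    (hc0 : 0 ≤ c) (hc1 : c ≤ 1) (hlow : c • p ≤ a) (hup : a ≤ p) :
    ‖p - CFC.sqrt a‖ ≤ 1 - √c := by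
  have hq := hp.one_sub
  have ha : 0 ≤ a := (smul_nonneg hc0 hp.nonneg).trans hlow
  have hT_low : algebraMap ℝ A c ≤ a + (1 - p) := calc
    algebraMap ℝ A c = c • p + c • (1 - p) := by
      rw [Algebra.algebraMap_eq_smul_one, ← smul_add, add_sub_cancel]
    _ ≤ a + 1 • (1 - p) := add_le_add hlow (smul_le_smul_of_nonneg_right hc1 hq.nonneg)
    _ = a + (1 - p) := by rw [one_smul]
  have hT_up : a + (1 - p) ≤ 1 := by simpa using add_le_add_left hup (1 - p)
  have hsqrt_low : algebraMap ℝ A √c ≤ CFC.sqrt (a + (1 - p)) :=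
    (CFC.sqrt_algebraMap_real hc0).symm.le.trans (CFC.sqrt_le_sqrt _ _ hT_low)
  have hsqrt_up : CFC.sqrt (a + (1 - p)) ≤ 1 := (CFC.sqrt_le_sqrt _ _ hT_up).trans_eq CFC.sqrt_one
  have heq : p - CFC.sqrt a = 1 - CFC.sqrt (a + (1 - p)) := by
    rw [hp.sqrt_add_one_sub ha hap]; abel
  rw [heq, CStarAlgebra.norm_le_iff_le_algebraMap _ (by simpa using Real.sqrt_le_one.mpr hc1)
    (sub_nonneg.2 hsqrt_up), map_sub, map_one]
  exact sub_le_sub_left hsqrt_low 1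

theorem norm_sub_sqrt_compress_le (hp : IsStarProjection p) {h u : A} (hh : IsSelfAdjoint h)
    (hhp : h * p = 0) {Δ ε : ℝ} (hΔ : 0 < Δ) (hgap : Δ ^ 2 • (1 - p) ≤ h * h)
    (hu : u ∈ unitary A) (hcomm : ‖u * h - h * u‖ ≤ ε) (hξ : ε / Δ ≤ 1) :
    ‖p - CFC.sqrt (star (p * u * p) * (p * u * p))‖ ≤ 1 - √(1 - (ε / Δ) ^ 2) := by
  have hξ0 : 0 ≤ ε / Δ := div_nonneg ((norm_nonneg _).trans hcomm) hΔ.le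
  have hdefect : p - star (p * u * p) * (p * u * p) ≤ (ε / Δ) ^ 2 • p := by
    have hscaled := (hp.sq_smul_sub_compress_le hh hhp hgap hu).trans
      (smul_le_smul_of_nonneg_right (pow_le_pow_left₀ (norm_nonneg _) hcomm 2) hp.nonneg)
    have := smul_le_smul_of_nonneg_left hscaled (inv_nonneg.2 (sq_nonneg Δ))
    rwa [smul_smul, smul_smul, inv_mul_cancel₀ (by positivity), one_smul, ← div_eq_inv_mul,
      ← div_pow] at this
  refine hp.norm_sub_sqrt_le ?_ (by nlinarith) (by nlinarith) ?_ ?_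
  · simp only [mul_assoc, hp.isIdempotentElem.eq]
  · rw [sub_smul, one_smul]
    exact sub_le_comm.1 hdefect
  · rw [← sub_nonneg, hp.sub_star_mul_self_compress hu]
    exact star_mul_self_nonneg _

end IsStarProjection

/-- Approximate unitarity on the ground space: if `H P = 0`, `H² ≥ Δ²(1-P)`,
`U` is unitary with `‖[U,H]‖ ≤ ε` and `ξ = ε/Δ ≤ 1`, then
`‖P - |P U P|‖ ≤ 1 - √(1 - ξ²)`, where `|M|` is the positive square root of `Mᴴ M`. -/
theorem stmt_5 (n : ℕ) (H P : Matrix (Fin n) (Fin n) ℂ) (Δ ε : ℝ) (hΔ : 0 < Δ)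
    (hH : H.IsHermitian) (hPherm : P.IsHermitian) (hPproj : P * P = P)
    (hker : H * P = 0)
    (hgap : (H * H - (Δ ^ 2 : ℝ) • (1 - P)).PosSemidef)
    (U : Matrix.unitaryGroup (Fin n) ℂ)
    (hcomm : ‖(U : Matrix (Fin n) (Fin n) ℂ) * H - H * (U : Matrix (Fin n) (Fin n) ℂ)‖ ≤ ε)
    (hξ : ε / Δ ≤ 1) :
    ‖P - (Matrix.posSemidef_conjTranspose_mul_self
        (P * (U : Matrix (Fin n) (Fin n) ℂ) * P)).sqrt‖ ≤
      1 - Real.sqrt (1 - (ε / Δ) ^ 2) := by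
  rw [Matrix.PosSemidef.sqrt_eq_cfcSqrt]
  exact IsStarProjection.norm_sub_sqrt_compress_le ⟨hPproj, hPherm⟩ hH hker hΔ hgap U.2 hcomm hξ
end

section
/- Let $u, v$ be unitaries with $\|uv - \eta vu\| \leq \delta$ where $\eta = e^{2\pi i/d}$, and let $|\psi\rangle$ be a unit eigenvector of $u$ with $u|\psi\rangle = |\psi\rangle$. Define $|j\rangle := v^j |\psi\rangle$. Then $|\langle j | u | j\rangle - \eta^j| \leq |j| \delta$ for every integer $j$. -/
open scoped Matrix Matrix.Norms.L2Operator InnerProductSpace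

/-!
Write `D_k := u v^k - η^k v^k u`, so that `D_1` has norm at most `δ`. The identity
`D_{k+1} = D_k v + η^k v^k D_1` and the unitary invariance of the norm show that `‖D_k‖` grows by
at most `δ` per step; negative `k` reduce to positive ones for the pair `(v⁻¹, η⁻¹)`, whose defect
`-η⁻¹ v⁻¹ D_1 v⁻¹` again has norm `‖D_1‖`. Since `u ψ = ψ` and `|j⟩ = v^j ψ` is a unit vector,
`⟨j|u|j⟩ - η^j = ⟨j| D_j ψ⟩`, which is at most `‖D_j‖` in absolute value.
-/

section Commutation

variable {𝕜 A : Type*} [NormedField 𝕜] [NormedRing A] [StarRing A] [CStarRing A]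
  [NormedAlgebra 𝕜 A]

theorem norm_mul_pow_sub_smul_pow_mul_le (u : A) (v : unitary A) {η : 𝕜} (hη : ‖η‖ ≤ 1) :
    ∀ k : ℕ, ‖u * ↑(v ^ k) - η ^ k • (↑(v ^ k) * u)‖ ≤ k * ‖u * v - η • (v * u)‖
  | 0 => by simp
  | k + 1 => by
    have hsplit : u * ↑(v ^ (k + 1)) - η ^ (k + 1) • (↑(v ^ (k + 1)) * u) =
        (u * ↑(v ^ k) - η ^ k • (↑(v ^ k) * u)) * v +
          η ^ k • (↑(v ^ k) * (u * v - η • (v * u))) := by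
      simp only [pow_succ, Submonoid.coe_mul, mul_sub, sub_mul, smul_sub, smul_mul_assoc,
        mul_smul_comm, smul_smul, mul_assoc]
      abel
    have hηk : ‖η ^ k‖ ≤ 1 := by simpa using pow_le_one₀ (norm_nonneg η) hη
    rw [hsplit]
    calc
      _ ≤ ‖u * ↑(v ^ k) - η ^ k • (↑(v ^ k) * u)‖ + ‖u * v - η • (v * u)‖ := by
        refine (norm_add_le _ _).trans (add_le_add ?_ ?_)
        · rw [CStarRing.norm_mul_mem_unitary _ v.2]
        · rw [norm_smul, CStarRing.norm_mem_unitary_mul _ (v ^ k).2]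
          exact mul_le_of_le_one_left (norm_nonneg _) hηk
      _ ≤ _ := by
        rw [Nat.cast_succ, add_one_mul]
        exact add_le_add_left (norm_mul_pow_sub_smul_pow_mul_le u v hη k) _

theorem norm_mul_inv_sub_inv_smul_inv_mul (u : A) (v : unitary A) {η : 𝕜} (hη : ‖η‖ = 1) :
    ‖u * ↑v⁻¹ - η⁻¹ • (↑v⁻¹ * u)‖ = ‖u * v - η • (v * u)‖ := by
  have hη0 : η ≠ 0 := norm_ne_zero_iff.mp (by simp [hη])
  have hconj : u * ↑v⁻¹ - η⁻¹ • (↑v⁻¹ * u) =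
      (-η⁻¹) • (↑v⁻¹ * (u * v - η • (v * u)) * ↑v⁻¹) := by
    have hl : (↑v⁻¹ : A) * v = 1 := Unitary.coe_star_mul_self v
    have hr : (v : A) * ↑v⁻¹ = 1 := Unitary.coe_mul_star_self v
    simp only [mul_sub, sub_mul, mul_smul_comm, smul_mul_assoc, mul_assoc, hr, mul_one,
      smul_sub, smul_smul, neg_mul, inv_mul_cancel₀ hη0, neg_smul, one_smul]
    rw [← mul_assoc _ (v : A), hl, one_mul]
    abel
  rw [hconj, norm_smul, CStarRing.norm_mul_mem_unitary _ (v⁻¹).2,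
    CStarRing.norm_mem_unitary_mul _ (v⁻¹).2]
  simp [hη]

theorem norm_mul_zpow_sub_smul_zpow_mul_le (u : A) (v : unitary A) {η : 𝕜} (hη : ‖η‖ = 1)
    (k : ℤ) : ‖u * ↑(v ^ k) - η ^ k • (↑(v ^ k) * u)‖ ≤ |(k : ℝ)| * ‖u * v - η • (v * u)‖ := by
  cases k with
  | ofNat m => simpa using norm_mul_pow_sub_smul_pow_mul_le u v hη.le m
  | negSucc m =>
    have hpos := norm_mul_pow_sub_smul_pow_mul_le u v⁻¹ (η := η⁻¹) (by simp [hη]) (m + 1)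
    rw [norm_mul_inv_sub_inv_smul_inv_mul u v hη] at hpos
    simp only [inv_pow] at hpos
    rw [zpow_negSucc, zpow_negSucc, Int.cast_negSucc, abs_neg]
    simpa [abs_of_nonneg (by positivity : (0 : ℝ) ≤ m + 1)] using hpos

end Commutation

section ExpectationValue

variable {𝕜 E : Type*} [RCLike 𝕜] [NormedAddCommGroup E] [InnerProductSpace 𝕜 E]

theorem norm_inner_apply_sub_le_of_apply_eq_self (T W : E →L[𝕜] E) (c : 𝕜) {ψ : E}
    (hTψ : T ψ = ψ) (hψ : ‖ψ‖ ≤ 1) (hWψ : ‖W ψ‖ = 1) :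
    ‖⟪W ψ, T (W ψ)⟫_𝕜 - c‖ ≤ ‖T * W - c • (W * T)‖ := by
  have hself : ⟪W ψ, W ψ⟫_𝕜 = 1 := by simp [inner_self_eq_norm_sq_to_K, hWψ]
  have hdefect : T (W ψ) - c • W ψ = (T * W - c • (W * T)) ψ := by simp [hTψ]
  calc ‖⟪W ψ, T (W ψ)⟫_𝕜 - c‖ = ‖⟪W ψ, (T * W - c • (W * T)) ψ⟫_𝕜‖ := by
        rw [← hdefect, inner_sub_right, inner_smul_right, hself, mul_one]
    _ ≤ ‖W ψ‖ * ‖(T * W - c • (W * T)) ψ‖ := norm_inner_le_norm _ _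
    _ ≤ 1 * (‖T * W - c • (W * T)‖ * 1) := by
        rw [hWψ]
        gcongr
        exact ContinuousLinearMap.le_opNorm_of_le _ hψ
    _ = _ := by ring

end ExpectationValue

theorem stmt_8_general (n d : ℕ) (δ : ℝ)
    (u v : Matrix.unitaryGroup (Fin n) ℂ)
    (h : ‖(u : Matrix (Fin n) (Fin n) ℂ) * v -
        Complex.exp (2 * Real.pi * Complex.I / d) • ((v : Matrix (Fin n) (Fin n) ℂ) * u)‖ ≤ δ)
    (ψ : EuclideanSpace ℂ (Fin n)) (hψ : ‖ψ‖ = 1)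
    (hfix : (u : Matrix (Fin n) (Fin n) ℂ).mulVec ψ = ψ)
    (j : ℤ)
    (ket : EuclideanSpace ℂ (Fin n))
    (hket : ket = ((v ^ j : Matrix.unitaryGroup (Fin n) ℂ) : Matrix (Fin n) (Fin n) ℂ).mulVec ψ)
    (expval : ℂ)
    (hexp : expval = inner (𝕜 := ℂ) ket
      (WithLp.toLp 2 ((u : Matrix (Fin n) (Fin n) ℂ).mulVec ket) : EuclideanSpace ℂ (Fin n))) :
    ‖expval - Complex.exp (2 * Real.pi * Complex.I / d) ^ j‖ ≤ |(j : ℝ)| * δ := by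
  set η := Complex.exp (2 * Real.pi * Complex.I / d)
  set W : Matrix (Fin n) (Fin n) ℂ := ↑(v ^ j)
  let Φ := Matrix.toEuclideanCLM (n := Fin n) (𝕜 := ℂ)
  have hη : ‖η‖ = 1 := by simp [η, Complex.norm_exp]
  have hket' : ket = Φ W ψ := WithLp.ofLp_injective 2 (by rw [hket, Matrix.ofLp_toEuclideanCLM])
  have hfix' : Φ u ψ = ψ := WithLp.ofLp_injective 2 (by rw [Matrix.ofLp_toEuclideanCLM, hfix])
  have hWψ : ‖Φ W ψ‖ = 1 := by
    rw [ContinuousLinearMap.norm_map_of_mem_unitary (Unitary.map_mem Φ (v ^ j).2), hψ]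
  have hnorm : ‖Φ u * Φ W - η ^ j • (Φ W * Φ u)‖ = ‖(u : Matrix (Fin n) (Fin n) ℂ) * W -
      η ^ j • (W * u)‖ := by
    rw [← map_mul, ← map_mul, ← map_smul, ← map_sub]
    rfl
  rw [hexp, hket']
  calc _ ≤ ‖Φ u * Φ W - η ^ j • (Φ W * Φ u)‖ :=
        norm_inner_apply_sub_le_of_apply_eq_self _ _ _ hfix' hψ.le hWψ
    _ = _ := hnorm
    _ ≤ |(j : ℝ)| * ‖(u : Matrix (Fin n) (Fin n) ℂ) * v - η • (v * u)‖ :=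
        norm_mul_zpow_sub_smul_zpow_mul_le _ v hη j
    _ ≤ |(j : ℝ)| * δ := by gcongr

/-- Change in expectation value, one pair: if `‖uv - η vu‖ ≤ δ` with `η = e^{2πi/d}`
and `u ψ = ψ` for a unit vector `ψ`, then the state `|j⟩ = v^j ψ` satisfies
`|⟨j|u|j⟩ - η^j| ≤ |j| δ` for every integer `j`. -/
theorem stmt_8 (n d : ℕ) (hd : 0 < d) (δ : ℝ)
    (u v : Matrix.unitaryGroup (Fin n) ℂ)
    (h : ‖(u : Matrix (Fin n) (Fin n) ℂ) * v -
        Complex.exp (2 * Real.pi * Complex.I / d) • ((v : Matrix (Fin n) (Fin n) ℂ) * u)‖ ≤ δ)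
    (ψ : EuclideanSpace ℂ (Fin n)) (hψ : ‖ψ‖ = 1)
    (hfix : (u : Matrix (Fin n) (Fin n) ℂ).mulVec ψ = ψ)
    (j : ℤ)
    (ket : EuclideanSpace ℂ (Fin n))
    (hket : ket = ((v ^ j : Matrix.unitaryGroup (Fin n) ℂ) : Matrix (Fin n) (Fin n) ℂ).mulVec ψ)
    (expval : ℂ)
    (hexp : expval = inner (𝕜 := ℂ) ket
      (WithLp.toLp 2 ((u : Matrix (Fin n) (Fin n) ℂ).mulVec ket) : EuclideanSpace ℂ (Fin n))) :
    ‖expval - Complex.exp (2 * Real.pi * Complex.I / d) ^ j‖ ≤ |(j : ℝ)| * δ :=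
  stmt_8_general n d δ u v h ψ hψ hfix j ket hket expval hexp
end

section
/- Let $u$ be a unitary on a finite-dimensional Hilbert space and $|x\rangle$ a unit vector with $|\langle x|u|x\rangle - e^{i\theta}| \leq \zeta$ for some $\zeta \in [0,1]$. Then $u$ has an eigenvalue $e^{i\phi}$ with $|\phi - \theta| \leq \cos^{-1}(1-\zeta)$ (for suitable representatives of the angles). -/
/-!
With `c = e^{-iθ}`, the self-adjoint operator `H = c u + (c u)*` commutes with the normal
operator `u`, and its largest eigenvalue `μ` is at least `⟪x, H x⟫ = 2 Re (c ⟪x, u x⟫) ≥ 2 (1 - ζ)`.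
Since `u` preserves the `μ`-eigenspace of `H`, it has an eigenvector `w` there, and its eigenvalue
`λ` satisfies `2 Re (c λ) ‖w‖² = ⟪w, H w⟫ = μ ‖w‖²`. Hence `Re (c λ) ≥ 1 - ζ`; as `|c λ| = 1`, the
argument of `c λ` is at most `arccos (1 - ζ)` in absolute value.
-/

open scoped Matrix

open Module.End

theorem Module.End.exists_hasEigenvector_mem_eigenspace_of_commute {K V : Type*} [Field K]
    [IsAlgClosed K] [AddCommGroup V] [Module K V] [FiniteDimensional K V] {f g : End K V}
    (hfg : Commute f g) {μ : K} (hμ : HasEigenvalue f μ) :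
    ∃ ν w, HasEigenvector g ν w ∧ w ∈ f.eigenspace μ := by
  have hg : Set.MapsTo g (f.eigenspace μ) (f.eigenspace μ) := mapsTo_genEigenspace_of_comm hfg μ 1
  have : Nontrivial (f.eigenspace μ) := Submodule.nontrivial_iff_ne_bot.mpr hμ
  obtain ⟨ν, hν⟩ := exists_eigenvalue (g.restrict hg)
  obtain ⟨w, hw⟩ := hν.exists_hasEigenvector
  refine ⟨ν, w, ⟨?_, ?_⟩, w.2⟩
  · rw [mem_eigenspace_iff]
    exact congrArg Subtype.val hw.apply_eq_smul
  · exact_mod_cast hw.2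

section InnerProductSpace

variable {E : Type*} [NormedAddCommGroup E] [InnerProductSpace ℂ E] [FiniteDimensional ℂ E]

theorem LinearMap.IsSymmetric.exists_hasEigenvalue_re_inner_le {T : E →ₗ[ℂ] E}
    (hT : T.IsSymmetric) {x : E} (hx : ‖x‖ = 1) :
    ∃ μ : ℝ, HasEigenvalue T μ ∧ (inner ℂ x (T x)).re ≤ μ := by
  have hx0 : x ≠ 0 := norm_ne_zero_iff.mp (by simp [hx])
  have : Nontrivial E := nontrivial_of_ne x 0 hx0
  refine ⟨_, hT.hasEigenvalue_iSup_of_finiteDimensional, ?_⟩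
  have hbdd : BddAbove (Set.range fun y : { y : E // y ≠ 0 } ↦
      RCLike.re (inner ℂ (T y) (y : E)) / ‖(y : E)‖ ^ 2) :=
    ⟨‖LinearMap.toContinuousLinearMap T‖, by
      rintro _ ⟨y, rfl⟩
      exact (le_abs_self _).trans
        ((LinearMap.toContinuousLinearMap T).rayleighQuotient_le_norm y)⟩
  calc (inner ℂ x (T x)).re = RCLike.re (inner ℂ (T x) x) / ‖x‖ ^ 2 := by
        rw [hx, one_pow, div_one, ← inner_re_symm]; rfl
    _ ≤ _ := le_ciSup hbdd ⟨x, hx0⟩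

namespace ContinuousLinearMap

theorem re_inner_add_star_apply (S : E →L[ℂ] E) (x : E) :
    (inner ℂ x ((S + star S) x)).re = 2 * (inner ℂ x (S x)).re := by
  rw [add_apply, inner_add_right, star_eq_adjoint, adjoint_inner_right, ← inner_conj_symm,
    Complex.add_re, Complex.conj_re]
  ring

theorem exists_hasEigenvalue_re_mul_inner_le_of_isStarNormal (T : E →L[ℂ] E) [IsStarNormal T]
    (c : ℂ) {x : E} (hx : ‖x‖ = 1) :
    ∃ ν, HasEigenvalue (T : E →ₗ[ℂ] E) ν ∧ (c * inner ℂ x (T x)).re ≤ (c * ν).re := by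
  set H := c • T + star (c • T)
  obtain ⟨μ, hμ, hxμ⟩ :=
    (IsSelfAdjoint.add_star_self (c • T)).isSymmetric.exists_hasEigenvalue_re_inner_le hx
  have hHT : Commute H T := by
    refine ((Commute.refl T).smul_left c).add_left ?_
    rw [star_smul]
    exact star_comm_self.smul_left _
  obtain ⟨ν, w, hw, hwH⟩ :=
    exists_hasEigenvector_mem_eigenspace_of_commute (hHT.map toLinearMapRingHom) hμ
  refine ⟨ν, hasEigenvalue_of_hasEigenvector hw, ?_⟩
  have hμν : μ * ‖w‖ ^ 2 = 2 * (c * ν).re * ‖w‖ ^ 2 := by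
    have h := re_inner_add_star_apply (c • T) w
    rw [show H w = (μ : ℂ) • w from mem_eigenspace_iff.mp hwH, smul_apply,
      show T w = ν • w from hw.apply_eq_smul] at h
    rw [inner_smul_right, inner_smul_right, inner_smul_right, inner_self_eq_norm_sq_to_K] at h
    norm_cast at h
    simpa only [RCLike.ofReal_eq_complex_ofReal, ← mul_assoc, Complex.ofReal_re,
      Complex.re_mul_ofReal] using h
  have hw0 : 0 < ‖w‖ ^ 2 := by have := hw.2; positivity
  rw [coe_coe, re_inner_add_star_apply, smul_apply, inner_smul_right] at hxμ
  nlinarith [mul_right_cancel₀ hw0.ne' hμν]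

end ContinuousLinearMap

end InnerProductSpace

theorem ContinuousLinearMap.norm_eq_one_of_mem_unitary_of_hasEigenvalue {𝕜 H : Type*} [RCLike 𝕜]
    [NormedAddCommGroup H] [InnerProductSpace 𝕜 H] [CompleteSpace H] {U : H →L[𝕜] H}
    (hU : U ∈ unitary (H →L[𝕜] H)) {ν : 𝕜} (hν : HasEigenvalue (U : H →ₗ[𝕜] H) ν) : ‖ν‖ = 1 := by
  obtain ⟨w, hw⟩ := hν.exists_hasEigenvector
  have h := norm_map_of_mem_unitary hU w
  rw [← coe_coe, hw.apply_eq_smul, norm_smul] at h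
  exact mul_right_cancel₀ (norm_ne_zero_iff.mpr hw.2) (h.trans (one_mul _).symm)

theorem Matrix.hasEigenvalue_mulVecLin_of_toEuclideanCLM {𝕜 n : Type*} [RCLike 𝕜] [Fintype n]
    [DecidableEq n] {A : Matrix n n 𝕜} {ν : 𝕜}
    (h : HasEigenvalue (toEuclideanCLM (𝕜 := 𝕜) A : EuclideanSpace 𝕜 n →ₗ[𝕜] _) ν) :
    HasEigenvalue A.mulVecLin ν := by
  obtain ⟨w, hw⟩ := h.exists_hasEigenvector
  refine hasEigenvalue_of_hasEigenvector (x := WithLp.ofLp w) ⟨?_, ?_⟩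
  · rw [mem_eigenspace_iff]
    exact congrArg WithLp.ofLp hw.apply_eq_smul
  · simpa using hw.2

namespace Complex

theorem one_sub_norm_sub_exp_le_re_exp_neg_mul (θ : ℝ) (z : ℂ) :
    1 - ‖z - exp (I * θ)‖ ≤ (exp (-(I * θ)) * z).re := by
  have hc : exp (-(I * θ)) * exp (I * θ) = 1 := by rw [← exp_add, neg_add_cancel, exp_zero]
  have hdist : ‖1 - exp (-(I * θ)) * z‖ = ‖z - exp (I * θ)‖ := by
    rw [← hc, ← mul_sub, norm_mul, norm_exp, norm_sub_rev]
    simp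
  have := re_le_norm (1 - exp (-(I * θ)) * z)
  rw [sub_re, one_re, hdist] at this
  linarith

theorem abs_arg_le_arccos_of_le_re {z : ℂ} (hz : ‖z‖ = 1) {a : ℝ} (h : a ≤ z.re) :
    |arg z| ≤ Real.arccos a := by
  have hz0 : z ≠ 0 := norm_ne_zero_iff.mp (by simp [hz])
  calc |arg z| = Real.arccos (Real.cos |arg z|) :=
        (Real.arccos_cos (abs_nonneg _) (abs_arg_le_pi z)).symm
    _ = Real.arccos z.re := by rw [Real.cos_abs, cos_arg hz0, hz, div_one]
    _ ≤ Real.arccos a := Real.arccos_le_arccos h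

theorem exists_exp_mul_eq_abs_sub_le_arccos {ν : ℂ} (hν : ‖ν‖ = 1) {θ a : ℝ}
    (h : a ≤ (exp (-(I * θ)) * ν).re) :
    ∃ φ : ℝ, exp (I * φ) = ν ∧ |φ - θ| ≤ Real.arccos a := by
  set w := exp (-(I * θ)) * ν
  have hw : ‖w‖ = 1 := by simp [w, norm_exp, hν]
  refine ⟨θ + arg w, ?_, by simpa using abs_arg_le_arccos_of_le_re hw h⟩
  have h := norm_mul_exp_arg_mul_I w
  rw [hw, ofReal_one, one_mul] at h
  calc exp (I * ↑(θ + arg w)) = exp (I * θ) * exp (arg w * I) := by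
        rw [ofReal_add, mul_add, exp_add, mul_comm I (arg w : ℂ)]
    _ = ν := by rw [h, ← mul_assoc, ← exp_add, add_neg_cancel, exp_zero, one_mul]

end Complex

theorem stmt_9_general (n : ℕ) (u : Matrix.unitaryGroup (Fin n) ℂ)
    (x : EuclideanSpace ℂ (Fin n)) (hx : ‖x‖ = 1)
    (θ ζ : ℝ)
    (hexp : ‖
        (inner (𝕜 := ℂ) x
            ((WithLp.toLp 2 ((u : Matrix (Fin n) (Fin n) ℂ).mulVec x) : EuclideanSpace ℂ (Fin n))) -
          Complex.exp (Complex.I * θ))‖ ≤ ζ) :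
    ∃ φ : ℝ,
      Module.End.HasEigenvalue (u : Matrix (Fin n) (Fin n) ℂ).mulVecLin
          (Complex.exp (Complex.I * φ)) ∧
        |φ - θ| ≤ Real.arccos (1 - ζ) := by
  set T := Matrix.toEuclideanCLM (𝕜 := ℂ) (u : Matrix (Fin n) (Fin n) ℂ)
  have hT : T ∈ unitary _ := Unitary.map_mem _ u.2
  have : IsStarNormal T := Unitary.coe_isStarNormal ⟨T, hT⟩
  obtain ⟨ν, hν, hre⟩ :=
    T.exists_hasEigenvalue_re_mul_inner_le_of_isStarNormal (Complex.exp (-(Complex.I * θ))) hx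
  have hexp' : ‖inner ℂ x (T x) - Complex.exp (Complex.I * θ)‖ ≤ ζ := hexp
  have hζ := Complex.one_sub_norm_sub_exp_le_re_exp_neg_mul θ (inner ℂ x (T x))
  obtain ⟨φ, hφ, hφθ⟩ := Complex.exists_exp_mul_eq_abs_sub_le_arccos
    (ContinuousLinearMap.norm_eq_one_of_mem_unitary_of_hasEigenvalue hT hν)
    (show 1 - ζ ≤ _ by linarith)
  exact ⟨φ, hφ ▸ Matrix.hasEigenvalue_mulVecLin_of_toEuclideanCLM hν, hφθ⟩

/-- Existence of eigenvalues: if a unit vector `x` has expectation value with a unitary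
`u` within `ζ` of `e^{iθ}`, then `u` has an eigenvalue `e^{iφ}` with
`|φ - θ| ≤ arccos (1 - ζ)`. -/
theorem stmt_9 (n : ℕ) (u : Matrix.unitaryGroup (Fin n) ℂ)
    (x : EuclideanSpace ℂ (Fin n)) (hx : ‖x‖ = 1)
    (θ ζ : ℝ) (hζ : ζ ∈ Set.Icc (0:ℝ) 1)
    (hexp : ‖
        (inner (𝕜 := ℂ) x
            ((WithLp.toLp 2 ((u : Matrix (Fin n) (Fin n) ℂ).mulVec x) : EuclideanSpace ℂ (Fin n))) -
          Complex.exp (Complex.I * θ))‖ ≤ ζ) :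
    ∃ φ : ℝ,
      Module.End.HasEigenvalue (u : Matrix (Fin n) (Fin n) ℂ).mulVecLin
          (Complex.exp (Complex.I * φ)) ∧
        |φ - θ| ≤ Real.arccos (1 - ζ) :=
  stmt_9_general n u x hx θ ζ hexp
end

section
/- Let $u, v$ be unitary $g \times g$ matrices and $\alpha \in [0,1)$. Then $\|uv - e^{2\pi i\alpha} vu\|_F \geq 2\sqrt{g}\,\sin\left(\pi \left|\frac{\lfloor g\alpha\rceil - g\alpha}{g}\right|\right)$, where $\|\cdot\|_F$ is the Frobenius norm and $\lfloor \cdot \rceil$ denotes rounding to the nearest integer. -/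
/-!
With `W = (uv)ᴴ(vu)`, a unitary of determinant one, and `c = e^{2πiα}`, expanding the square gives
`‖uv - c vu‖_F² = 2g - 2 Re(c tr W)`. The numbers `c λ` (`λ` running over the eigenvalues of `W`)
lie on the unit circle and multiply to `c^g = e^{2πigα}`, so their arguments `ψⱼ ∈ (-π, π]` sum to
`2πgα` modulo `2π`, whence `∑ |ψⱼ| ≥ 2πδ` with `δ = |⌊gα⌉ - gα| ≤ 1/2`. It remains to bound
`∑ cos ψⱼ ≤ g cos(2πδ/g)`: shrink the `|ψⱼ|` to total exactly `2πδ ≤ π`; then at most one of them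
exceeds `π/2`, and moving its excess onto another angle only increases the cosine sum, after
which Jensen's inequality for the concave function `cos` on `[0, π/2]` applies. Finally
`2g - 2g cos(2x) = 4g sin² x`.
-/

open scoped Matrix

/-- The Frobenius norm `‖M‖_F = √(Tr MᴴM) = √(∑ |M i j|²)`. -/
noncomputable def frobeniusNorm {g : ℕ} (M : Matrix (Fin g) (Fin g) ℂ) : ℝ :=
  Real.sqrt (∑ i, ∑ j, ‖M i j‖ ^ 2)

open Real Finset

lemma cos_add_cos_le_cos_add_cos {a b m : ℝ} (hb : 0 ≤ b) (hbm : b ≤ m) (hma : m ≤ a)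
    (hab : a + b ≤ π) : cos a + cos b ≤ cos m + cos (a + b - m) := by
  rw [cos_add_cos, cos_add_cos, show (m + (a + b - m)) / 2 = (a + b) / 2 by ring]
  have hmid : 0 ≤ cos ((a + b) / 2) :=
    cos_nonneg_of_mem_Icc ⟨by linarith [pi_pos], by linarith⟩
  have hhalf : cos ((a - b) / 2) ≤ cos ((m - (a + b - m)) / 2) := by
    rw [← cos_abs ((m - (a + b - m)) / 2)]
    exact cos_le_cos_of_nonneg_of_le_pi (abs_nonneg _) (by linarith)
      (abs_le.2 ⟨by linarith, by linarith⟩)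
  nlinarith

section
variable {ι : Type*} [Fintype ι]

lemma sum_cos_le_card_mul_cos_of_mem_Icc (b : ι → ℝ)
    (hb : ∀ j, b j ∈ Set.Icc (-(π / 2)) (π / 2)) :
    ∑ j, cos (b j) ≤ Fintype.card ι * cos ((∑ j, b j) / Fintype.card ι) := by
  cases isEmpty_or_nonempty ι
  · simp
  have hcard : (0 : ℝ) < Fintype.card ι := by exact_mod_cast Fintype.card_pos
  have hjensen := strictConcaveOn_cos_Icc.concaveOn.le_map_sum (t := univ)
    (w := fun _ ↦ (Fintype.card ι : ℝ)⁻¹) (p := b) (fun _ _ ↦ by positivity)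
    (by simp [card_univ, hcard.ne']) (fun j _ ↦ hb j)
  simp only [smul_eq_mul, ← mul_sum] at hjensen
  rw [inv_mul_eq_div, inv_mul_eq_div, div_le_iff₀ hcard] at hjensen
  linarith

lemma sum_comp_update_update [DecidableEq ι] (f : ℝ → ℝ) (b : ι → ℝ) {j k : ι} (hjk : j ≠ k)
    (x y : ℝ) :
    ∑ i, f (Function.update (Function.update b j x) k y i)
      = ∑ i, f (b i) + (f x - f (b j)) + (f y - f (b k)) := by
  have hdiff := Fintype.sum_eq_add (f := fun i ↦
      f (Function.update (Function.update b j x) k y i) - f (b i)) j k hjk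
    fun i ⟨hij, hik⟩ ↦ by simp [hij, hik]
  rw [sum_sub_distrib] at hdiff
  simp only [Function.update_self, Function.update_of_ne hjk] at hdiff
  linarith

lemma sum_cos_le_card_mul_cos_of_sum_le_pi (b : ι → ℝ) (hb : ∀ j, 0 ≤ b j)
    (hsum : ∑ j, b j ≤ π) :
    ∑ j, cos (b j) ≤ Fintype.card ι * cos ((∑ j, b j) / Fintype.card ι) := by
  classical
  by_cases hsmall : ∀ j, b j ≤ π / 2
  · exact sum_cos_le_card_mul_cos_of_mem_Icc b fun j ↦ ⟨by linarith [hb j, pi_pos], hsmall j⟩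
  push Not at hsmall
  obtain ⟨k, hk⟩ := hsmall
  have hpair : ∀ j ≠ k, b j + b k ≤ ∑ i, b i := fun j hj ↦ by
    rw [← sum_pair hj]
    exact sum_le_sum_of_subset_of_nonneg (subset_univ _) fun i _ _ ↦ hb i
  by_cases hk_only : ∀ j, j = k
  · have hunique : Fintype.card ι = 1 := Fintype.card_eq_one_iff.2 ⟨k, hk_only⟩
    have hsingle : ∀ f : ι → ℝ, ∑ j, f j = f k := fun f ↦
      Fintype.sum_eq_single k fun j hj ↦ absurd (hk_only j) hj
    simp [hunique, hsingle]
  push Not at hk_only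
  obtain ⟨j, hj⟩ := hk_only
  have hjk := hpair j hj
  set b' := Function.update (Function.update b j (π / 2)) k (b k + b j - π / 2)
  have hsum' : ∑ i, b' i = ∑ i, b i := by
    have := sum_comp_update_update id b hj (π / 2) (b k + b j - π / 2)
    simp only [id] at this
    linarith
  have hcos : ∑ i, cos (b i) ≤ ∑ i, cos (b' i) := by
    have := cos_add_cos_le_cos_add_cos (hb j) (by linarith) hk.le (by linarith)
    rw [sum_comp_update_update cos b hj]
    linarith
  have hb'_mem : ∀ i, b' i ∈ Set.Icc (-(π / 2)) (π / 2) := fun i ↦ by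
    by_cases hik : i = k
    · subst hik
      simp only [b', Function.update_self]
      constructor <;> linarith [hb j]
    by_cases hij : i = j
    · subst hij
      simp only [b', Function.update_of_ne hik, Function.update_self]
      constructor <;> linarith [pi_pos]
    simp only [b', Function.update_of_ne hik, Function.update_of_ne hij]
    constructor <;> linarith [hb i, hpair i hik]
  calc ∑ i, cos (b i) ≤ ∑ i, cos (b' i) := hcos
    _ ≤ _ := sum_cos_le_card_mul_cos_of_mem_Icc b' hb'_mem
    _ = _ := by rw [hsum']

lemma sum_cos_le_card_mul_cos (b : ι → ℝ) (hb : ∀ j, b j ∈ Set.Icc 0 π) {s : ℝ}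
    (hs : s ∈ Set.Icc 0 π) (hs_le : s ≤ ∑ j, b j) :
    ∑ j, cos (b j) ≤ Fintype.card ι * cos (s / Fintype.card ι) := by
  -- Cosine is antitone on `[0, π]`, so scaling `b` down to total `s` only raises the left side.
  set t := s / ∑ j, b j
  have ht0 : 0 ≤ t := div_nonneg hs.1 (sum_nonneg fun j _ ↦ (hb j).1)
  have ht1 : t ≤ 1 := div_le_one_of_le₀ hs_le (sum_nonneg fun j _ ↦ (hb j).1)
  have hsum : ∑ j, t * b j = s := by
    rw [← mul_sum]
    rcases (sum_nonneg fun j _ ↦ (hb j).1 : 0 ≤ ∑ j, b j).eq_or_lt with h | h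
    · simp [t, ← h, le_antisymm (h ▸ hs_le) hs.1]
    · exact div_mul_cancel₀ _ h.ne'
  calc ∑ j, cos (b j) ≤ ∑ j, cos (t * b j) := sum_le_sum fun j _ ↦
        cos_le_cos_of_nonneg_of_le_pi (mul_nonneg ht0 (hb j).1) (hb j).2
          (mul_le_of_le_one_left (hb j).1 ht1)
    _ ≤ _ := sum_cos_le_card_mul_cos_of_sum_le_pi _ (fun j ↦ mul_nonneg ht0 (hb j).1)
        (hsum ▸ hs.2)
    _ = _ := by rw [hsum]

lemma exists_sum_arg_eq_of_prod_eq_exp (z : ι → ℂ) (hz : ∀ j, ‖z j‖ = 1) {x : ℝ}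
    (hprod : ∏ j, z j = Complex.exp (2 * π * Complex.I * x)) :
    ∃ n : ℤ, ∑ j, (z j).arg = 2 * π * (x + n) := by
  have hexp : Complex.exp (↑(∑ j, (z j).arg) * Complex.I)
      = Complex.exp (↑(2 * π * x) * Complex.I) := by
    have hz_exp : ∀ j, Complex.exp ((z j).arg * Complex.I) = z j := fun j ↦ by
      simpa [hz j] using Complex.norm_mul_exp_arg_mul_I (z j)
    simp only [Complex.ofReal_sum, sum_mul, Complex.exp_sum, hz_exp, hprod]
    congr 1
    push_cast
    ring
  obtain ⟨n, hn⟩ := Complex.exp_eq_exp_iff_exists_int.1 hexp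
  refine ⟨n, Complex.ofReal_injective (mul_right_cancel₀ Complex.I_ne_zero ?_)⟩
  rw [hn]
  push_cast
  ring

lemma sum_re_le_card_mul_cos_of_prod_eq_exp (z : ι → ℂ) (hz : ∀ j, ‖z j‖ = 1) {x : ℝ}
    (hprod : ∏ j, z j = Complex.exp (2 * π * Complex.I * x)) :
    ∑ j, (z j).re ≤ Fintype.card ι * cos (2 * π * |round x - x| / Fintype.card ι) := by
  have hre : ∀ j, (z j).re = cos |(z j).arg| := fun j ↦ by
    rw [cos_abs, Complex.cos_arg (norm_ne_zero_iff.1 (by simp [hz j])), hz j, div_one]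
  obtain ⟨n, hn⟩ := exists_sum_arg_eq_of_prod_eq_exp z hz hprod
  have hdist : 2 * π * |round x - x| ≤ ∑ j, |(z j).arg| := calc
    2 * π * |round x - x| ≤ 2 * π * |x - (-n : ℤ)| := by
      rw [abs_sub_comm]; exact mul_le_mul_of_nonneg_left (round_le x (-n)) two_pi_pos.le
    _ = |∑ j, (z j).arg| := by
      rw [hn, abs_mul, abs_of_pos two_pi_pos]; push_cast; rw [sub_neg_eq_add]
    _ ≤ ∑ j, |(z j).arg| := abs_sum_le_sum_abs _ _
  simp only [hre]
  refine sum_cos_le_card_mul_cos _ (fun j ↦ ⟨abs_nonneg _, Complex.abs_arg_le_pi _⟩)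
    ⟨by positivity, ?_⟩ hdist
  nlinarith [abs_sub_comm x (round x), abs_sub_round x, pi_pos]
end

lemma Complex.norm_exp_two_pi_mul_I_mul (x : ℝ) : ‖exp (2 * π * I * x)‖ = 1 := by
  rw [norm_exp]; simp

namespace Matrix
variable {n : Type*} [Fintype n] [DecidableEq n]

omit [DecidableEq n] in
lemma sum_sq_norm_eq_re_trace_conjTranspose_mul_self {m : Type*} [Fintype m] (M : Matrix m n ℂ) :
    ∑ i, ∑ j, ‖M i j‖ ^ 2 = (Mᴴ * M).trace.re := by
  simp only [trace, diag_apply, mul_apply, conjTranspose_apply, Complex.re_sum]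
  rw [sum_comm]
  refine sum_congr rfl fun i _ ↦ sum_congr rfl fun j _ ↦ ?_
  rw [RCLike.star_def, Complex.conj_mul']
  norm_cast

lemma sum_sq_norm_sub_smul_of_mem_unitaryGroup {A B : Matrix n n ℂ}
    (hA : A ∈ unitaryGroup n ℂ) (hB : B ∈ unitaryGroup n ℂ) {c : ℂ} (hc : ‖c‖ = 1) :
    ∑ i, ∑ j, ‖(A - c • B) i j‖ ^ 2 = 2 * Fintype.card n - 2 * (c * (Aᴴ * B).trace).re := by
  have hA' : Aᴴ * A = 1 := Unitary.star_mul_self_of_mem hA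
  have hB' : Bᴴ * B = 1 := Unitary.star_mul_self_of_mem hB
  have hcc : c * star c = 1 := by rw [RCLike.star_def, Complex.mul_conj', hc]; norm_num
  have htrace : (Bᴴ * A).trace = star (Aᴴ * B).trace := by
    rw [← trace_conjTranspose, conjTranspose_mul, conjTranspose_conjTranspose]
  have hexpand : (A - c • B)ᴴ * (A - c • B)
      = 1 + 1 - (star c • (Bᴴ * A) + c • (Aᴴ * B)) := by
    simp only [conjTranspose_sub, conjTranspose_smul, sub_mul, mul_sub, smul_mul_assoc,
      mul_smul_comm, smul_sub, smul_smul, hA', hB', hcc, one_smul]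
    abel
  rw [sum_sq_norm_eq_re_trace_conjTranspose_mul_self, hexpand, trace_sub, trace_add, trace_add,
    trace_smul, trace_smul, htrace, trace_one, smul_eq_mul, smul_eq_mul, ← star_mul',
    Complex.sub_re, Complex.add_re, Complex.add_re, Complex.natCast_re, RCLike.star_def,
    Complex.conj_re]
  ring

lemma norm_eq_one_of_isRoot_charpoly {W : Matrix n n ℂ} (hW : W ∈ unitaryGroup n ℂ) {μ : ℂ}
    (hμ : W.charpoly.IsRoot μ) : ‖μ‖ = 1 :=
  open scoped Matrix.Norms.L2Operator in
  spectrum.norm_eq_one_of_unitary hW (mem_spectrum_of_isRoot_charpoly hμ)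

lemma re_exp_mul_trace_le {W : Matrix n n ℂ} (hW : W ∈ unitaryGroup n ℂ) (hdet : W.det = 1)
    (α : ℝ) :
    (Complex.exp (2 * π * Complex.I * α) * W.trace).re ≤ Fintype.card n *
      cos (2 * π * |round (Fintype.card n * α) - Fintype.card n * α| / Fintype.card n) := by
  set c := Complex.exp (2 * π * Complex.I * α)
  set m := W.charpoly.roots
  have hcard : Multiset.card m = Fintype.card n := by
    rw [← (IsAlgClosed.splits W.charpoly).natDegree_eq_card_roots, charpoly_natDegree_eq_dim]
  have hnorm : ∀ μ : m, ‖c * μ‖ = 1 := fun μ ↦ by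
    rw [norm_mul, Complex.norm_exp_two_pi_mul_I_mul,
      norm_eq_one_of_isRoot_charpoly hW (Polynomial.isRoot_of_mem_roots Multiset.coe_mem),
      one_mul]
  have hprod : ∏ μ : m, c * μ = Complex.exp (2 * π * Complex.I * ↑(Fintype.card n * α)) := by
    rw [prod_mul_distrib, prod_const, card_univ, Multiset.card_coe, hcard,
      ← Multiset.prod_eq_prod_coe, ← det_eq_prod_roots_charpoly, hdet, mul_one,
      ← Complex.exp_nat_mul]
    congr 1
    push_cast
    ring
  have := sum_re_le_card_mul_cos_of_prod_eq_exp _ hnorm hprod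
  rwa [Multiset.card_coe, hcard, ← Complex.re_sum, ← mul_sum, ← Multiset.sum_eq_sum_coe,
    ← trace_eq_sum_roots_charpoly] at this

end Matrix

open Matrix

theorem stmt_13_general (g : ℕ) (α : ℝ)
    (u v : Matrix.unitaryGroup (Fin g) ℂ) :
    2 * Real.sqrt g *
        Real.sin (Real.pi * |(round (g * α) : ℝ) - g * α| / g) ≤
      frobeniusNorm ((u : Matrix (Fin g) (Fin g) ℂ) * (v : Matrix (Fin g) (Fin g) ℂ) -
        Complex.exp (2 * Real.pi * Complex.I * α) •
          ((v : Matrix (Fin g) (Fin g) ℂ) * (u : Matrix (Fin g) (Fin g) ℂ))) := by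
  set A : Matrix (Fin g) (Fin g) ℂ := u * v
  set B : Matrix (Fin g) (Fin g) ℂ := v * u
  have hA : A ∈ unitaryGroup (Fin g) ℂ := mul_mem u.2 v.2
  have hB : B ∈ unitaryGroup (Fin g) ℂ := mul_mem v.2 u.2
  have hdet : (Aᴴ * B).det = 1 := by
    rw [det_mul, det_mul_comm, ← det_mul, ← star_eq_conjTranspose,
      Unitary.star_mul_self_of_mem hA, det_one]
  have hW : Aᴴ * B ∈ unitaryGroup (Fin g) ℂ := mul_mem (Unitary.star_mem hA) hB
  have htrace := re_exp_mul_trace_le hW hdet α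
  rw [Fintype.card_fin] at htrace
  rw [frobeniusNorm, sum_sq_norm_sub_smul_of_mem_unitaryGroup hA hB
    (Complex.norm_exp_two_pi_mul_I_mul α), Fintype.card_fin]
  set x := π * |(round (g * α) : ℝ) - g * α| / g
  have hcos : cos (2 * π * |(round (g * α) : ℝ) - g * α| / g) = 1 - 2 * sin x ^ 2 := by
    rw [sin_sq_eq_half_sub, show 2 * x = 2 * π * |(round (g * α) : ℝ) - g * α| / g by ring]
    ring
  calc 2 * √g * sin x ≤ √((2 * √g * sin x) ^ 2) := (le_abs_self _).trans (sqrt_sq_eq_abs _).ge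
    _ = √(2 * g - 2 * (g * cos (2 * π * |(round (g * α) : ℝ) - g * α| / g))) := by
      rw [hcos, mul_pow, mul_pow, sq_sqrt (Nat.cast_nonneg g)]
      ring_nf
    _ ≤ _ := sqrt_le_sqrt (by linarith)

/-- Minimum twisted commutation value in the Frobenius norm: for `g`-dimensional
unitaries `u, v` and `α ∈ [0,1)`,
`‖uv - e^{2πiα} vu‖_F ≥ 2√g sin(π |⌊gα⌉ - gα| / g)`. -/
theorem stmt_13 (g : ℕ) (α : ℝ) (hα : α ∈ Set.Ico (0:ℝ) 1)
    (u v : Matrix.unitaryGroup (Fin g) ℂ) :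
    2 * Real.sqrt g *
        Real.sin (Real.pi * |(round (g * α) : ℝ) - g * α| / g) ≤
      frobeniusNorm ((u : Matrix (Fin g) (Fin g) ℂ) * (v : Matrix (Fin g) (Fin g) ℂ) -
        Complex.exp (2 * Real.pi * Complex.I * α) •
          ((v : Matrix (Fin g) (Fin g) ℂ) * (u : Matrix (Fin g) (Fin g) ℂ))) :=
  stmt_13_general g α u v
end

section
/- Let $A$ and $B$ be $n \times n$ complex matrices with $A$ normal and $\|[A,B]\| \leq \epsilon$. Then for any eigenvalue $\lambda$ of $A$, there exist a unit vector $|u\rangle$ and a complex number $\mu$ such that $\|A|u\rangle - \lambda|u\rangle\| \leq n\sqrt{\epsilon/2}$ and $\|B|u\rangle - \mu|u\rangle\| \leq n\sqrt{\epsilon/2}$. -/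
open scoped Matrix Matrix.Norms.L2Operator

/-- Reinterpret a tuple as a vector in Euclidean space (with the `ℓ²` norm). -/
def toEuc {n : ℕ} (x : Fin n → ℂ) : EuclideanSpace ℂ (Fin n) := WithLp.toLp 2 x

/-!
Diagonalize `A = U D U⋆` with `U` unitary (the real and imaginary parts of a normal matrix are
commuting Hermitian matrices, so they have a joint orthonormal eigenbasis). Conjugating `B` by `U`
preserves the commutator norm, and in the eigenbasis the commutator has entries `(dᵢ - dⱼ) Bᵢⱼ`.

Let `r = √(ε/2)` and `δ = 2r/√n`, and let `S` be the connected component of `λ` in the graph on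
the eigenvalues joining those at distance `≤ δ`. Then all eigenvalues in `S` lie within
`(n - 1)δ ≤ nr` of `λ`, while every eigenvalue outside `S` is more than `δ` away from every
eigenvalue in `S`. A unit eigenvector `u` of the compression of `B` to the coordinates in `S` is
therefore an approximate eigenvector of `D` with error `(n - 1)δ`, and `Bu - μu` is the block of
`B` from `S` to its complement applied to `u`. The entries of that block are at most `1/δ` times
those of the commutator, so its Frobenius norm is at most `√n ε / δ = nr`.
-/

open scoped ComplexStarModule
open Module Module.End Complex Matrix WithLp

section SpectralTheorem

theorem LinearMap.exists_orthonormalBasis_eigenvectors_of_isStarNormal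
    {E : Type*} [NormedAddCommGroup E] [InnerProductSpace ℂ E] [FiniteDimensional ℂ E]
    (T : E →ₗ[ℂ] E) [IsStarNormal T] {N : ℕ} (hN : finrank ℂ E = N) :
    ∃ (b : OrthonormalBasis (Fin N) ℂ E) (d : Fin N → ℂ), ∀ i, T (b i) = d i • b i := by
  have hre : (ℜ T : E →ₗ[ℂ] E).IsSymmetric := (isSymmetric_iff_isSelfAdjoint _).mpr (ℜ T).2
  have him : (ℑ T : E →ₗ[ℂ] E).IsSymmetric := (isSymmetric_iff_isSelfAdjoint _).mpr (ℑ T).2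
  set V : ℂ × ℂ → Submodule ℂ E := fun ba ↦
    eigenspace (ℜ T : E →ₗ[ℂ] E) ba.2 ⊓ eigenspace (ℑ T : E →ₗ[ℂ] E) ba.1
  have hint : DirectSum.IsInternal V :=
    hre.directSum_isInternal_of_commute him (Commute.realPart_imaginaryPart T)
  have : Fintype {ba // V ba ≠ ⊥} := hint.submodule_iSupIndep.fintypeNeBotOfFiniteDimensional
  have horth : OrthogonalFamily ℂ (fun ba : {ba // V ba ≠ ⊥} ↦ V ba)
      (fun ba ↦ (V ba).subtypeₗᵢ) :=
    (hre.orthogonalFamily_eigenspace_inf_eigenspace him).comp Subtype.coe_injective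
  have hint' := DirectSum.isInternal_ne_bot_iff.mpr hint
  refine ⟨hint'.subordinateOrthonormalBasis hN horth, fun i ↦
    let ba := (hint'.subordinateOrthonormalBasisIndex hN i horth).1; ba.2 + I * ba.1, fun i ↦ ?_⟩
  obtain ⟨hr, hi⟩ :=
    Submodule.mem_inf.mp (hint'.subordinateOrthonormalBasis_subordinate hN i horth)
  conv_lhs => rw [← realPart_add_I_smul_imaginaryPart T]
  rw [LinearMap.add_apply, LinearMap.smul_apply, mem_eigenspace_iff.mp hr,
    mem_eigenspace_iff.mp hi, add_smul, smul_smul]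

variable {𝕜 ι : Type*} [RCLike 𝕜] [Fintype ι] [DecidableEq ι]

theorem Matrix.isStarNormal_toEuclideanLin {A : Matrix ι ι 𝕜} (hA : IsStarNormal A) :
    IsStarNormal (toEuclideanLin A) := by
  rw [isStarNormal_iff, LinearMap.star_eq_adjoint, ← toEuclideanLin_conjTranspose_eq_adjoint]
  ext1 x
  simp only [Module.End.mul_apply, toLpLin_apply, mulVec_mulVec]
  exact congr(toLp 2 ($(hA.star_comm_self.eq) *ᵥ x.ofLp))

theorem Matrix.exists_unitary_diagonal_of_isStarNormal {A : Matrix ι ι ℂ} (hA : IsStarNormal A) :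
    ∃ U ∈ unitaryGroup ι ℂ, ∃ d : ι → ℂ, A = U * diagonal d * star U := by
  have := isStarNormal_toEuclideanLin hA
  obtain ⟨b, d, hbd⟩ := (toEuclideanLin A).exists_orthonormalBasis_eigenvectors_of_isStarNormal
    finrank_euclideanSpace
  let e := (Fintype.equivFin ι).symm
  let U := (EuclideanSpace.basisFun ι ℂ).toBasis.toMatrix (b.reindex e)
  have hU : U ∈ unitaryGroup ι ℂ :=
    (EuclideanSpace.basisFun ι ℂ).toMatrix_orthonormalBasis_mem_unitary _
  have hU_apply : ∀ k j, U k j = b (e.symm j) k := by simp [U, Basis.toMatrix_apply]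
  have hAU : A * U = U * diagonal (d ∘ e.symm) := by
    ext i j
    rw [mul_diagonal, mul_apply, hU_apply, mul_comm]
    simpa [mulVec, dotProduct, hU_apply] using congr($(hbd (e.symm j)) i)
  refine ⟨U, hU, d ∘ e.symm, ?_⟩
  calc A = A * (U * star U) := by rw [Unitary.mul_star_self_of_mem hU, Matrix.mul_one]
    _ = U * diagonal (d ∘ e.symm) * star U := by rw [← Matrix.mul_assoc, hAU]

end SpectralTheorem

section UnitaryInvariance

variable {𝕜 ι : Type*} [RCLike 𝕜] [Fintype ι] [DecidableEq ι] {U : Matrix ι ι 𝕜}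

theorem Matrix.norm_toLp_mulVec_of_mem_unitaryGroup (hU : U ∈ unitaryGroup ι 𝕜)
    (x : EuclideanSpace 𝕜 ι) : ‖toLp 2 (U *ᵥ x)‖ = ‖x‖ :=
  (toEuclideanCLM (n := ι) (𝕜 := 𝕜) U).norm_map_of_mem_unitary (Unitary.map_mem _ hU) x

theorem Matrix.norm_unitary_conj_mulVec_sub_smul (hU : U ∈ unitaryGroup ι 𝕜) (M : Matrix ι ι 𝕜)
    (c : 𝕜) (u : EuclideanSpace 𝕜 ι) :
    ‖toLp 2 ((U * M * star U) *ᵥ (U *ᵥ u)) - c • toLp 2 (U *ᵥ u)‖ =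
      ‖toLp 2 (M *ᵥ u) - c • u‖ := by
  rw [mulVec_mulVec, mul_assoc, mul_assoc, Unitary.star_mul_self_of_mem hU, mul_one,
    ← mulVec_mulVec, ← norm_toLp_mulVec_of_mem_unitaryGroup hU (toLp 2 (M *ᵥ u) - c • u)]
  simp [mulVec_sub, mulVec_smul]

theorem Matrix.norm_commutator_unitary_conj (hU : U ∈ unitaryGroup ι 𝕜) (M B : Matrix ι ι 𝕜) :
    ‖U * M * star U * B - B * (U * M * star U)‖ =
      ‖M * (star U * B * U) - star U * B * U * M‖ := by
  have hU' : star U * U = 1 := Unitary.star_mul_self_of_mem hU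
  have hconj : M * (star U * B * U) - star U * B * U * M =
      star U * (U * M * star U * B - B * (U * M * star U)) * U := by
    simp only [mul_sub, sub_mul, ← mul_assoc, hU', one_mul]
    simp only [mul_assoc, hU', mul_one]
  rw [hconj, CStarRing.norm_mul_mem_unitary _ hU,
    CStarRing.norm_mem_unitary_mul _ (Unitary.star_mem hU)]

end UnitaryInvariance

section EuclideanNorms

variable {𝕜 κ ι : Type*} [RCLike 𝕜] [Fintype κ] [Fintype ι]

theorem EuclideanSpace.norm_le_mul_norm_of_forall {x y : EuclideanSpace 𝕜 ι} {c : ℝ}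
    (hc : 0 ≤ c) (h : ∀ i, ‖x i‖ ≤ c * ‖y i‖) : ‖x‖ ≤ c * ‖y‖ := by
  refine le_of_sq_le_sq ?_ (by positivity)
  rw [mul_pow, EuclideanSpace.norm_sq_eq, EuclideanSpace.norm_sq_eq, Finset.mul_sum]
  gcongr with i
  rw [← mul_pow]
  exact pow_le_pow_left₀ (norm_nonneg _) (h i) 2

theorem Matrix.norm_toLp_mulVec_le_sqrt_sum (X : Matrix κ ι 𝕜) (v : EuclideanSpace 𝕜 ι) :
    ‖toLp 2 (X *ᵥ v)‖ ≤ √(∑ i, ∑ j, ‖X i j‖ ^ 2) * ‖v‖ := by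
  refine le_of_sq_le_sq ?_ (by positivity)
  rw [mul_pow, Real.sq_sqrt (by positivity), EuclideanSpace.norm_sq_eq, EuclideanSpace.norm_sq_eq,
    Finset.sum_mul]
  gcongr with i
  calc ‖(X *ᵥ v) i‖ ^ 2 ≤ (∑ j, ‖X i j‖ * ‖v j‖) ^ 2 := by
        gcongr
        exact (norm_sum_le _ _).trans_eq (by simp_rw [norm_mul])
    _ ≤ _ := Finset.sum_mul_sq_le_sq_mul_sq _ _ _

theorem Matrix.sum_norm_sq_apply_le_l2_opNorm_sq [DecidableEq ι] (C : Matrix κ ι 𝕜) (j : ι) :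
    ∑ i, ‖C i j‖ ^ 2 ≤ ‖C‖ ^ 2 := by
  have h := C.l2_opNorm_mulVec (EuclideanSpace.single j 1)
  rw [PiLp.norm_single, norm_one, mul_one] at h
  simpa [EuclideanSpace.norm_sq_eq] using pow_le_pow_left₀ (norm_nonneg _) h 2

end EuclideanNorms

section Cluster

theorem dist_le_length_mul_of_walk {ι X : Type*} [PseudoMetricSpace X] {x : ι → X} {δ : ℝ}
    {i j : ι} (p : (SimpleGraph.fromRel fun i j ↦ dist (x i) (x j) ≤ δ).Walk i j) :
    dist (x i) (x j) ≤ p.length * δ := by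
  induction p with
  | nil => simp
  | @cons i k j h p ih =>
    have hik : dist (x i) (x k) ≤ δ := by
      rcases h.2 with h | h
      · exact h
      · rwa [dist_comm]
    calc dist (x i) (x j) ≤ dist (x i) (x k) + dist (x k) (x j) := dist_triangle _ _ _
      _ ≤ (p.cons h).length * δ := by push_cast [SimpleGraph.Walk.length_cons]; linarith

theorem exists_separated_cluster {ι X : Type*} [Fintype ι] [PseudoMetricSpace X] (x : ι → X)
    {δ : ℝ} (hδ : 0 ≤ δ) (i₀ : ι) :
    ∃ S : Finset ι, i₀ ∈ S ∧ (∀ j ∈ S, dist (x i₀) (x j) ≤ (Fintype.card ι - 1) * δ) ∧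
      ∀ i ∉ S, ∀ j ∈ S, δ < dist (x i) (x j) := by
  classical
  let G := SimpleGraph.fromRel fun i j ↦ dist (x i) (x j) ≤ δ
  refine ⟨Finset.univ.filter (G.Reachable i₀), by simp, fun j hj ↦ ?_, fun k hk j hj ↦ ?_⟩
  · obtain ⟨p⟩ := (Finset.mem_filter.mp hj).2
    have hlen : ((p.toPath : G.Walk i₀ j).length : ℝ) + 1 ≤ Fintype.card ι := by
      exact_mod_cast p.toPath.2.length_lt
    calc dist (x i₀) (x j) ≤ (p.toPath : G.Walk i₀ j).length * δ := dist_le_length_mul_of_walk _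
      _ ≤ (Fintype.card ι - 1) * δ := by gcongr; linarith
  · by_contra! hkj
    have hne : j ≠ k := by rintro rfl; exact hk hj
    exact hk (Finset.mem_filter.mpr ⟨Finset.mem_univ _,
      (Finset.mem_filter.mp hj).2.trans (SimpleGraph.Adj.reachable ⟨hne, Or.inr hkj⟩)⟩)

end Cluster

section Compression

variable {ι : Type*} [Fintype ι] [DecidableEq ι]

theorem Matrix.exists_unit_eigenvector_compression (B : Matrix ι ι ℂ) {S : Finset ι}
    (hS : S.Nonempty) :
    ∃ (μ : ℂ) (u : EuclideanSpace ℂ ι), ‖u‖ = 1 ∧ (∀ i ∉ S, u i = 0) ∧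
      ∀ i ∈ S, (B *ᵥ u) i = μ * u i := by
  have : Nonempty S := hS.to_subtype
  obtain ⟨μ, hμ⟩ := Module.End.exists_eigenvalue (B.submatrix ((↑) : S → ι) (↑)).mulVecLin
  obtain ⟨v, hv⟩ := hμ.exists_hasEigenvector
  have hBv : B.submatrix (↑) (↑) *ᵥ v = μ • v := hv.apply_eq_smul
  let w : EuclideanSpace ℂ ι := toLp 2 fun i ↦ if h : i ∈ S then v ⟨i, h⟩ else 0
  have hw : ∀ j : S, w j = v j := fun j ↦ dif_pos j.2
  have hw0 : ∀ i ∉ S, w i = 0 := fun i hi ↦ dif_neg hi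
  have hw_ne : w ≠ 0 := fun h ↦ hv.2 (funext fun j ↦ by rw [← hw j, h]; rfl)
  have hBw : ∀ i ∈ S, (B *ᵥ w) i = μ * w i := fun i hi ↦ calc
    (B *ᵥ w) i = ∑ j ∈ S, B i j * w j :=
        (Finset.sum_subset (Finset.subset_univ S) fun j _ hj ↦ by rw [hw0 j hj, mul_zero]).symm
    _ = (B.submatrix ((↑) : S → ι) (↑) *ᵥ v) ⟨i, hi⟩ := by
        rw [← Finset.sum_coe_sort]; simp only [hw]; rfl
    _ = μ * w i := by rw [hBv, hw ⟨i, hi⟩]; rfl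
  refine ⟨μ, (‖w‖⁻¹ : ℂ) • w, norm_smul_inv_norm hw_ne, fun i hi ↦ ?_, fun i hi ↦ ?_⟩
  · simp [hw0 i hi]
  · simp [mulVec_smul, hBw i hi, mul_left_comm]

end Compression

section OffDiagBlock

variable {𝕜 ι : Type*} [RCLike 𝕜] [Fintype ι] [DecidableEq ι]

def Matrix.offDiagBlock {α : Type*} [Zero α] (S : Finset ι) (B : Matrix ι ι α) : Matrix ι ι α :=
  of fun i j ↦ if i ∉ S ∧ j ∈ S then B i j else 0

theorem Matrix.toLp_mulVec_sub_smul_eq_offDiagBlock {S : Finset ι} {B : Matrix ι ι 𝕜} {μ : 𝕜}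
    {u : EuclideanSpace 𝕜 ι} (hsupp : ∀ i ∉ S, u i = 0) (heig : ∀ i ∈ S, (B *ᵥ u) i = μ * u i) :
    toLp 2 (B *ᵥ u) - μ • u = toLp 2 (offDiagBlock S B *ᵥ u) := by
  ext i
  by_cases hi : i ∈ S
  · simp only [PiLp.sub_apply, PiLp.smul_apply, smul_eq_mul, heig i hi, sub_self]
    simp [offDiagBlock, mulVec, dotProduct, hi]
  · simp only [PiLp.sub_apply, PiLp.smul_apply, hsupp i hi, smul_zero, sub_zero, mulVec,
      dotProduct, offDiagBlock, of_apply, hi, not_false_eq_true, true_and]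
    refine Finset.sum_congr rfl fun j _ ↦ ?_
    by_cases hj : j ∈ S <;> simp [hj, hsupp]

theorem Matrix.diagonal_mul_sub_mul_diagonal_apply (d : ι → 𝕜) (B : Matrix ι ι 𝕜) (i j : ι) :
    (diagonal d * B - B * diagonal d) i j = (d i - d j) * B i j := by
  simp only [sub_apply, diagonal_mul, mul_diagonal]
  ring

theorem Matrix.sq_mul_sum_norm_sq_offDiagBlock_le {S : Finset ι} {d : ι → 𝕜} {δ : ℝ}
    (hδ : 0 ≤ δ) (hgap : ∀ i ∉ S, ∀ j ∈ S, δ < dist (d i) (d j)) (B : Matrix ι ι 𝕜) :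
    δ ^ 2 * ∑ i, ∑ j, ‖offDiagBlock S B i j‖ ^ 2 ≤
      Fintype.card ι * ‖diagonal d * B - B * diagonal d‖ ^ 2 := by
  have hentry : ∀ i j, δ ^ 2 * ‖offDiagBlock S B i j‖ ^ 2 ≤
      ‖(diagonal d * B - B * diagonal d) i j‖ ^ 2 := by
    intro i j
    rw [diagonal_mul_sub_mul_diagonal_apply, norm_mul, ← dist_eq_norm, offDiagBlock, of_apply]
    split_ifs with h
    · rw [← mul_pow]
      gcongr
      exact (hgap i h.1 j h.2).le
    · rw [norm_zero, zero_pow two_ne_zero, mul_zero]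
      positivity
  calc δ ^ 2 * ∑ i, ∑ j, ‖offDiagBlock S B i j‖ ^ 2
      = ∑ j, ∑ i, δ ^ 2 * ‖offDiagBlock S B i j‖ ^ 2 := by
        rw [Finset.mul_sum, Finset.sum_comm]; simp_rw [Finset.mul_sum]
    _ ≤ ∑ _j : ι, ‖diagonal d * B - B * diagonal d‖ ^ 2 := by
        gcongr with j
        exact (Finset.sum_le_sum fun i _ ↦ hentry i j).trans (sum_norm_sq_apply_le_l2_opNorm_sq _ j)
    _ = _ := by simp

theorem Matrix.offDiagBlock_eq_zero_of_commute {S : Finset ι} {d : ι → 𝕜} {δ : ℝ}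
    (hδ : 0 ≤ δ) (hgap : ∀ i ∉ S, ∀ j ∈ S, δ < dist (d i) (d j)) {B : Matrix ι ι 𝕜}
    (hB : diagonal d * B = B * diagonal d) : offDiagBlock S B = 0 := by
  ext i j
  have hC : (d i - d j) * B i j = 0 := by
    rw [← diagonal_mul_sub_mul_diagonal_apply, hB, sub_self, zero_apply]
  simp only [offDiagBlock, of_apply, zero_apply]
  split_ifs with h
  · have hd : d i - d j ≠ 0 := by
      rw [← norm_pos_iff, ← dist_eq_norm]
      exact hδ.trans_lt (hgap i h.1 j h.2)
    exact (mul_eq_zero.mp hC).resolve_left hd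
  · rfl

end OffDiagBlock

theorem sub_one_mul_two_mul_div_sqrt_le {n r : ℝ} (hn : 1 ≤ n) (hr : 0 ≤ r) :
    (n - 1) * (2 * r / √n) ≤ n * r := by
  have hs : 1 ≤ √n := Real.one_le_sqrt.mpr hn
  have hsq : √n ^ 2 = n := Real.sq_sqrt (by linarith)
  -- with `s = √n`: `s³ - 2s² + 2 = (s - 4/3)² (s + 2/3) + 22/27`
  have key : 2 * (√n ^ 2 - 1) ≤ √n ^ 3 := by
    nlinarith [mul_nonneg (sq_nonneg (√n - 4 / 3)) (by linarith : 0 ≤ √n + 2 / 3)]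
  rw [mul_div_assoc', div_le_iff₀ (by positivity)]
  calc (n - 1) * (2 * r) = 2 * (√n ^ 2 - 1) * r := by rw [hsq]; ring
    _ ≤ √n ^ 3 * r := by gcongr
    _ = n * r * √n := by rw [pow_succ, hsq]; ring

theorem exists_approx_common_eigenvector_of_diagonal {ι : Type*} [Fintype ι] [DecidableEq ι]
    (d : ι → ℂ) (B : Matrix ι ι ℂ) {r : ℝ} (hr : 0 ≤ r)
    (hcomm : ‖diagonal d * B - B * diagonal d‖ ≤ 2 * r ^ 2) (i₀ : ι) :
    ∃ (u : EuclideanSpace ℂ ι) (μ : ℂ), ‖u‖ = 1 ∧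
      ‖toLp 2 (diagonal d *ᵥ u) - d i₀ • u‖ ≤ Fintype.card ι * r ∧
      ‖toLp 2 (B *ᵥ u) - μ • u‖ ≤ Fintype.card ι * r := by
  set n := Fintype.card ι
  have hn : (1 : ℝ) ≤ n := Nat.one_le_cast.mpr (Fintype.card_pos_iff.mpr ⟨i₀⟩)
  set δ := 2 * r / √n
  have hδ : 0 ≤ δ := by positivity
  obtain ⟨S, hi₀, hdiam, hgap⟩ := exists_separated_cluster d hδ i₀
  obtain ⟨μ, u, hu, hsupp, heig⟩ := B.exists_unit_eigenvector_compression ⟨i₀, hi₀⟩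
  refine ⟨u, μ, hu, ?_, ?_⟩
  · calc ‖toLp 2 (diagonal d *ᵥ u) - d i₀ • u‖ ≤ ((n - 1) * δ) * ‖u‖ := by
          refine EuclideanSpace.norm_le_mul_norm_of_forall (by nlinarith) fun i ↦ ?_
          by_cases hi : i ∈ S
          · simp only [PiLp.sub_apply, PiLp.smul_apply, mulVec_diagonal, smul_eq_mul, ← sub_mul,
              norm_mul, ← dist_eq_norm, dist_comm (d i)]
            gcongr
            exact hdiam i hi
          · simp [hsupp i hi, mulVec_diagonal]
      _ ≤ n * r := by rw [hu, mul_one]; exact sub_one_mul_two_mul_div_sqrt_le hn hr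
  · rw [toLp_mulVec_sub_smul_eq_offDiagBlock hsupp heig]
    refine (norm_toLp_mulVec_le_sqrt_sum _ _).trans ?_
    rw [hu, mul_one, Real.sqrt_le_left (by positivity)]
    rcases hr.eq_or_lt with rfl | hr
    · have hC : diagonal d * B = B * diagonal d :=
        sub_eq_zero.mp (norm_le_zero_iff.mp (by simpa using hcomm))
      simp [offDiagBlock_eq_zero_of_commute hδ hgap hC]
    · refine le_of_mul_le_mul_left ((sq_mul_sum_norm_sq_offDiagBlock_le hδ hgap B).trans ?_)
        (by positivity : 0 < δ ^ 2)
      calc n * ‖diagonal d * B - B * diagonal d‖ ^ 2 ≤ n * (2 * r ^ 2) ^ 2 := by gcongr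
        _ = δ ^ 2 * (n * r) ^ 2 := by
          rw [div_pow, Real.sq_sqrt (by positivity)]
          field_simp

/-- Shared approximate eigenvector: if `A` is normal, `‖[A,B]‖ ≤ ε`, and `λ` is an
eigenvalue of `A`, then there are a unit vector `u` and `μ : ℂ` with
`‖Au - λu‖ ≤ n√(ε/2)` and `‖Bu - μu‖ ≤ n√(ε/2)`. -/
theorem stmt_17 (n : ℕ) (A B : Matrix (Fin n) (Fin n) ℂ) (ε : ℝ)
    (hA : A * Aᴴ = Aᴴ * A)
    (hcomm : ‖A * B - B * A‖ ≤ ε)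
    (lam : ℂ) (hlam : Module.End.HasEigenvalue A.mulVecLin lam) :
    ∃ (u : EuclideanSpace ℂ (Fin n)) (μ : ℂ), ‖u‖ = 1 ∧
      ‖toEuc (A.mulVec u) - lam • u‖ ≤ n * Real.sqrt (ε / 2) ∧
      ‖toEuc (B.mulVec u) - μ • u‖ ≤ n * Real.sqrt (ε / 2) := by
  obtain ⟨U, hU, d, rfl⟩ := exists_unitary_diagonal_of_isStarNormal ⟨hA.symm⟩
  obtain ⟨i₀, rfl⟩ : lam ∈ Set.range d := by
    rw [← spectrum_diagonal, ← Unitary.spectrum_star_right_conjugate (U := ⟨U, hU⟩),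
      ← spectrum_toLin']
    exact hlam.mem_spectrum
  have hB : B = U * (star U * B * U) * star U := by
    simp only [← mul_assoc, Unitary.mul_star_self_of_mem hU, one_mul]
    simp only [mul_assoc, Unitary.mul_star_self_of_mem hU, mul_one]
  have hε : 2 * √(ε / 2) ^ 2 = ε := by
    rw [Real.sq_sqrt (by linarith [(norm_nonneg _).trans hcomm])]; ring
  obtain ⟨u, μ, hu, hAu, hBu⟩ := exists_approx_common_eigenvector_of_diagonal d (star U * B * U)
    (Real.sqrt_nonneg _) (by rwa [hε, ← norm_commutator_unitary_conj hU]) i₀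
  refine ⟨toLp 2 (U *ᵥ u), μ, by rwa [norm_toLp_mulVec_of_mem_unitaryGroup hU], ?_, ?_⟩
  · exact (norm_unitary_conj_mulVec_sub_smul hU _ _ u).trans_le (by simpa using hAu)
  · rw [hB]
    exact (norm_unitary_conj_mulVec_sub_smul hU _ _ u).trans_le (by simpa using hBu)
end
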